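/- arXiv:1609.00118 — 4 statements merged into one kernel-verified Lean document; each statement's English description precedes it below -/
import Mathlib

section
/- With c^∞ defined as c^ω ; ⊤, infinite iteration unfolds: c^∞ = c ; c^∞. -/
/-- A Concurrent Refinement Algebra over a complete distributive lattice of
commands, ordered by refinement (`⊓` = nondeterministic choice, `⊥` = abort,
`⊤` = magic), with sequential composition `seq` (identity `nil`),
synchronous parallel `par`, weak conjunction `conj`, a Boolean-style
sub-lattice of atomic steps `Atomic` (with `eps` the environment-step identity
of `par`) and a sub-lattice of tests `Test`. -/
structure CRA (C : Type*) [CompleteDistribLattice C] where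
  seq : C → C → C
  par : C → C → C
  conj : C → C → C
  nil : C
  eps : C
  Atomic : C → Prop
  Test : C → Prop
  seq_assoc : ∀ a b c, seq (seq a b) c = seq a (seq b c)
  seq_nil : ∀ c, seq c nil = c
  nil_seq : ∀ c, seq nil c = c
  seq_mono_left : ∀ d : C, Monotone fun c => seq c d
  seq_mono_right : ∀ c : C, Monotone (seq c)
  top_seq : ∀ c, seq ⊤ c = ⊤
  bot_seq : ∀ c, seq ⊥ c = ⊥
  /-- sequential composition distributes over arbitrary choices on the right -/
  seq_sInf_distrib : ∀ (S : Set C) (d : C), seq (sInf S) d = ⨅ c ∈ S, seq c d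
  par_assoc : ∀ a b c, par (par a b) c = par a (par b c)
  par_comm : ∀ a b, par a b = par b a
  /-- parallel distributes over arbitrary choices -/
  par_sInf_distrib : ∀ (c : C) (S : Set C), par c (sInf S) = ⨅ d ∈ S, par c d
  nil_par_nil : par nil nil = nil
  atomic_par : ∀ a b, Atomic a → Atomic b → Atomic (par a b)
  /-- synchronous interchange law for atomic steps -/
  interchange : ∀ a b c d, Atomic a → Atomic b →
    par (seq a c) (seq b d) = seq (par a b) (par c d)
  par_atomic_seq_nil : ∀ a c, Atomic a → par (seq a c) nil = ⊤
  atomic_eps : Atomic eps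
  /-- `eps` is the identity of parallel on atomic steps -/
  eps_par_atomic : ∀ a, Atomic a → par eps a = a
  conj_assoc : ∀ a b c, conj (conj a b) c = conj a (conj b c)
  conj_comm : ∀ a b, conj a b = conj b a
  conj_idem : ∀ a, conj a a = a
  conj_bot : ∀ c, conj c ⊥ = ⊥
  conj_atomic : ∀ a b, Atomic a → Atomic b → conj a b = a ⊔ b
  conj_test : ∀ t t', Test t → Test t' → conj t t' = t ⊔ t'
  conj_interchange : ∀ a b c d, Atomic a → Atomic b →
    conj (seq a c) (seq b d) = seq (conj a b) (conj c d)
  conj_atomic_seq_nil : ∀ a c, Atomic a → conj (seq a c) nil = ⊤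
  conj_sInf_distrib : ∀ (c : C) (S : Set C), S.Nonempty →
    conj c (sInf S) = ⨅ d ∈ S, conj c d
  atomic_conj : ∀ a b, Atomic a → Atomic b → Atomic (conj a b)
  test_nil : Test nil
  test_nil_le : ∀ t, Test t → nil ≤ t
  test_seq_par_interchange : ∀ t t' c d, Test t → Test t' →
    par (seq t c) (seq t' d) = seq (t ⊔ t') (par c d)
  conj_test_interchange : ∀ t t' c d, Test t → Test t' →
    conj (seq t c) (seq t' d) = seq (t ⊔ t') (conj c d)

namespace CRA

variable {C : Type*} [CompleteDistribLattice C] (A : CRA C)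

/-- possibly infinite iteration `c^ω = μ x. nil ⊓ c;x` -/
def omega (c : C) : C :=
  OrderHom.lfp ⟨fun x => A.nil ⊓ A.seq c x,
    fun _ _ h => inf_le_inf_left _ (A.seq_mono_right c h)⟩

/-- finite iteration `c^* = ν x. nil ⊓ c;x` -/
def star (c : C) : C :=
  OrderHom.gfp ⟨fun x => A.nil ⊓ A.seq c x,
    fun _ _ h => inf_le_inf_left _ (A.seq_mono_right c h)⟩

/-- infinite iteration `c^∞ = c^ω ; ⊤` -/
def inft (c : C) : C := A.seq (A.omega c) ⊤

/-- finite powers: `c^0 = nil`, `c^(i+1) = c ; c^i` -/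
def pow (c : C) : ℕ → C
  | 0 => A.nil
  | n + 1 => A.seq c (pow c n)

end CRA

namespace CRA

variable {C : Type*} [CompleteDistribLattice C] (A : CRA C)

lemma inf_seq (a b d : C) : A.seq (a ⊓ b) d = A.seq a d ⊓ A.seq b d := by
  rw [← sInf_pair, A.seq_sInf_distrib, iInf_pair]

lemma omega_unfold (c : C) : A.omega c = A.nil ⊓ A.seq c (A.omega c) :=
  (OrderHom.map_lfp _).symm

end CRA

theorem inft_unfold {C : Type*} [CompleteDistribLattice C] (A : CRA C) (c : C) :
    A.inft c = A.seq c (A.inft c) :=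
  calc A.inft c = A.seq (A.nil ⊓ A.seq c (A.omega c)) ⊤ :=
        congrArg (A.seq · ⊤) (A.omega_unfold c)
    _ = A.seq c (A.inft c) := by
        rw [A.inf_seq, A.nil_seq, top_inf_eq, A.seq_assoc, CRA.inft]
end

section
/- Assuming conjunctivity of sequential composition, finite iteration equals the meet over all finite powers: c^* = ⊓_{i∈ℕ} c^i. -/
namespace CRA

variable {C : Type*} [CompleteDistribLattice C] (A : CRA C)

theorem star_eq_nil_inf_seq_star (c : C) : A.star c = A.nil ⊓ A.seq c (A.star c) :=
  (OrderHom.map_gfp _).symm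

theorem le_star_of_le_nil_inf_seq {c x : C} (h : x ≤ A.nil ⊓ A.seq c x) : x ≤ A.star c :=
  OrderHom.le_gfp _ h

theorem star_le_pow (c : C) (i : ℕ) : A.star c ≤ A.pow c i := by
  induction i with
  | zero => exact (A.star_eq_nil_inf_seq_star c).trans_le inf_le_left
  | succ i ih =>
    exact (A.star_eq_nil_inf_seq_star c).trans_le (inf_le_right.trans (A.seq_mono_right c ih))

theorem seq_iInf_of_conjunctive {c : C}
    (hc : ∀ S : Set C, S.Nonempty → A.seq c (sInf S) = ⨅ d ∈ S, A.seq c d)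
    {ι : Sort*} [Nonempty ι] (f : ι → C) : A.seq c (⨅ i, f i) = ⨅ i, A.seq c (f i) := by
  rw [← sInf_range, hc _ (Set.range_nonempty f), iInf_range]

theorem iInf_pow_le_nil_inf_seq_of_conjunctive {c : C}
    (hc : ∀ S : Set C, S.Nonempty → A.seq c (sInf S) = ⨅ d ∈ S, A.seq c d) :
    ⨅ i, A.pow c i ≤ A.nil ⊓ A.seq c (⨅ i, A.pow c i) := by
  refine le_inf (iInf_le _ 0) ?_
  rw [A.seq_iInf_of_conjunctive hc]
  exact le_iInf fun i => iInf_le _ (i + 1)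

end CRA

theorem star_eq_iInf_pow {C : Type*} [CompleteDistribLattice C] (A : CRA C)
    (hconj : ∀ (c : C) (S : Set C), S.Nonempty → A.seq c (sInf S) = ⨅ d ∈ S, A.seq c d) (c : C) :
    A.star c = ⨅ i : ℕ, A.pow c i :=
  le_antisymm (le_iInf (A.star_le_pow c))
    (A.le_star_of_le_nil_inf_seq (A.iInf_pow_le_nil_inf_seq_of_conjunctive (hconj c)))
end

section
/- In the synchronous atomic-step algebra with conjunctive sequential composition, for atomic steps a, b and commands c, d: a^*;c ∥ b^*;d = (a∥b)^* ; ((c∥d) ⊓ (c ∥ b;b^*;d) ⊓ (a;a^*;c ∥ d)). -/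
/-!
Under conjunctive sequential composition `c^*` is the meet of the powers `c^i`, so the left-hand
side is the meet of `a^i;c ∥ b^j;d` over all `i j`. Interchange gives
`(a∥b)^n ; (a^i;c ∥ b^j;d) = a^(n+i);c ∥ b^(n+j);d`, so the `n`-th term of the right-hand
side is the meet over the "hook" of index pairs `(n, n)`, `(n, j)` with `j > n` and `(i, n)`
with `i > n`.
Every pair lies on exactly one hook, namely the one at `n = min i j`.
-/

theorem iInf_iInf_eq_iInf_hook {α : Type*} [CompleteLattice α] (F : ℕ → ℕ → α) :
    (⨅ i, ⨅ j, F i j) =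
      ⨅ n, (F n n ⊓ ⨅ j, F n (n + (j + 1))) ⊓ ⨅ i, F (n + (i + 1)) n := by
  have hle : ∀ i j, (⨅ i, ⨅ j, F i j) ≤ F i j := fun i j =>
    (iInf_le _ i).trans (iInf_le _ j)
  apply le_antisymm
  · exact le_iInf fun n =>
      le_inf (le_inf (hle n n) (le_iInf fun _ => hle _ _)) (le_iInf fun _ => hle _ _)
  · refine le_iInf₂ fun i j => ?_
    rcases lt_trichotomy i j with hij | rfl | hji
    · obtain ⟨k, rfl⟩ : ∃ k, j = i + (k + 1) := ⟨j - i - 1, by omega⟩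
      exact (iInf_le _ i).trans (inf_le_left.trans (inf_le_right.trans (iInf_le _ k)))
    · exact (iInf_le _ i).trans (inf_le_left.trans inf_le_left)
    · obtain ⟨k, rfl⟩ : ∃ k, i = j + (k + 1) := ⟨i - j - 1, by omega⟩
      exact (iInf_le _ j).trans (inf_le_right.trans (iInf_le _ k))

namespace CRA

variable {C : Type*} [CompleteDistribLattice C] (A : CRA C)

def IsConjunctive : Prop :=
  ∀ (c : C) (S : Set C), S.Nonempty → A.seq c (sInf S) = ⨅ d ∈ S, A.seq c d

theorem seq_iInf_left {ι : Sort*} (f : ι → C) (d : C) :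
    A.seq (⨅ i, f i) d = ⨅ i, A.seq (f i) d := by
  rw [iInf, A.seq_sInf_distrib, iInf_range]

theorem par_iInf_right {ι : Sort*} (c : C) (f : ι → C) :
    A.par c (⨅ i, f i) = ⨅ i, A.par c (f i) := by
  rw [iInf, A.par_sInf_distrib, iInf_range]

theorem par_iInf_left {ι : Sort*} (f : ι → C) (d : C) :
    A.par (⨅ i, f i) d = ⨅ i, A.par (f i) d := by
  simp only [A.par_comm _ d, par_iInf_right]

theorem pow_add (c : C) (m n : ℕ) :
    A.pow c (m + n) = A.seq (A.pow c m) (A.pow c n) := by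
  induction m with
  | zero => rw [Nat.zero_add, pow, A.nil_seq]
  | succ m ih => rw [Nat.succ_add, pow, pow, ih, A.seq_assoc]

theorem par_seq_pow_seq_pow {a b : C} (ha : A.Atomic a) (hb : A.Atomic b) (c d : C) (n : ℕ) :
    A.par (A.seq (A.pow a n) c) (A.seq (A.pow b n) d) =
      A.seq (A.pow (A.par a b) n) (A.par c d) := by
  induction n with
  | zero => simp only [pow, A.nil_seq]
  | succ n ih => simp only [pow, A.seq_assoc, A.interchange a b _ _ ha hb, ih]

theorem seq_pow_par_par_seq_pow {a b : C} (ha : A.Atomic a) (hb : A.Atomic b)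
    (c d : C) (n i j : ℕ) :
    A.seq (A.pow (A.par a b) n) (A.par (A.seq (A.pow a i) c) (A.seq (A.pow b j) d)) =
      A.par (A.seq (A.pow a (n + i)) c) (A.seq (A.pow b (n + j)) d) := by
  rw [A.pow_add, A.pow_add, A.seq_assoc, A.seq_assoc, A.par_seq_pow_seq_pow ha hb]

section Conjunctive

variable {A} (hA : A.IsConjunctive)
include hA

theorem seq_iInf_right {ι : Sort*} [Nonempty ι] (c : C) (f : ι → C) :
    A.seq c (⨅ i, f i) = ⨅ i, A.seq c (f i) := by
  rw [iInf, hA c _ (Set.range_nonempty f), iInf_range]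

theorem seq_inf_right (c d e : C) : A.seq c (d ⊓ e) = A.seq c d ⊓ A.seq c e := by
  rw [← sInf_pair, hA c _ (Set.insert_nonempty d {e}), iInf_pair]

theorem star_eq_iInf_pow (c : C) : A.star c = ⨅ i, A.pow c i := by
  have hunfold : A.star c = A.nil ⊓ A.seq c (A.star c) := (OrderHom.map_gfp _).symm
  apply le_antisymm
  · refine le_iInf fun i => ?_
    induction i with
    | zero => exact hunfold.le.trans inf_le_left
    | succ i ih => exact hunfold.le.trans (inf_le_right.trans (A.seq_mono_right c ih))
  · refine OrderHom.le_gfp _ (le_inf (iInf_le _ 0) ?_)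
    show ⨅ i, A.pow c i ≤ A.seq c (⨅ i, A.pow c i)
    rw [seq_iInf_right hA]
    exact le_iInf fun i => iInf_le _ (i + 1)

theorem seq_star_eq_iInf (c d : C) : A.seq (A.star c) d = ⨅ i, A.seq (A.pow c i) d := by
  rw [star_eq_iInf_pow hA, seq_iInf_left]

theorem seq_seq_star_eq_iInf (c d : C) :
    A.seq c (A.seq (A.star c) d) = ⨅ i, A.seq (A.pow c (i + 1)) d := by
  simp only [seq_star_eq_iInf hA, seq_iInf_right hA, ← A.seq_assoc, pow]

end Conjunctive

end CRA

theorem atomic_iteration_finite {C : Type*} [CompleteDistribLattice C] (A : CRA C)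
    (hconj : ∀ (c : C) (S : Set C), S.Nonempty → A.seq c (sInf S) = ⨅ d ∈ S, A.seq c d) (a b c d : C) (ha : A.Atomic a) (hb : A.Atomic b) :
    A.par (A.seq (A.star a) c) (A.seq (A.star b) d) =
      A.seq (A.star (A.par a b))
        (A.par c d ⊓ A.par c (A.seq b (A.seq (A.star b) d)) ⊓
          A.par (A.seq a (A.seq (A.star a) c)) d) := by
  set F : ℕ → ℕ → C := fun i j => A.par (A.seq (A.pow a i) c) (A.seq (A.pow b j) d) with hF
  have hstart : A.par c d = F 0 0 := by simp only [hF, CRA.pow, A.nil_seq]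
  have hleft : A.par (A.seq (A.star a) c) (A.seq (A.star b) d) = ⨅ i, ⨅ j, F i j := by
    rw [CRA.seq_star_eq_iInf hconj, CRA.seq_star_eq_iInf hconj, A.par_iInf_left]
    simp only [hF, A.par_iInf_right]
  have hb_first : A.par c (A.seq b (A.seq (A.star b) d)) = ⨅ j, F 0 (j + 1) := by
    simp only [hF, CRA.seq_seq_star_eq_iInf hconj, A.par_iInf_right, CRA.pow, A.nil_seq]
  have ha_first : A.par (A.seq a (A.seq (A.star a) c)) d = ⨅ i, F (i + 1) 0 := by
    simp only [hF, CRA.seq_seq_star_eq_iInf hconj, A.par_iInf_left, CRA.pow, A.nil_seq]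
  rw [hleft, hstart, hb_first, ha_first, CRA.seq_star_eq_iInf hconj, iInf_iInf_eq_iInf_hook]
  refine iInf_congr fun n => ?_
  simp only [CRA.seq_inf_right hconj, CRA.seq_iInf_right hconj, hF,
    A.seq_pow_par_par_seq_pow ha hb, Nat.add_zero]
end

section
/- Weak conjunction of iterated atomic steps: a^ω ⋓ b^ω = (a ⋓ b)^ω for atomic steps a and b. -/
/-!
Since `a ⋓ b = a ⊔ b` for atomic steps, monotonicity of `ω` and idempotence of `⋓` give
`a^ω ⋓ b^ω ≤ (a ⋓ b)^ω`. Conversely, unfolding both iterations once and applying the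
interchange law shows that `a^ω ⋓ b^ω` is a fixed point of `x ↦ nil ⊓ (a ⋓ b);x`, so it lies
above the least one, `(a ⋓ b)^ω`.
-/

namespace CRA

variable {C : Type*} [CompleteDistribLattice C] (A : CRA C)

theorem conj_inf_right (c x y : C) : A.conj c (x ⊓ y) = A.conj c x ⊓ A.conj c y := by
  rw [← sInf_pair, A.conj_sInf_distrib c {x, y} (Set.insert_nonempty x {y}), iInf_pair]

theorem conj_mono_right (c : C) : Monotone (A.conj c) := fun x y hxy => by
  rw [← inf_eq_left.mpr hxy, conj_inf_right]
  exact inf_le_right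

theorem conj_le {x y z : C} (hx : x ≤ z) (hy : y ≤ z) : A.conj x y ≤ z :=
  calc A.conj x y ≤ A.conj x z := A.conj_mono_right x hy
    _ = A.conj z x := A.conj_comm x z
    _ ≤ A.conj z z := A.conj_mono_right z hx
    _ = z := A.conj_idem z

def omegaStep (c : C) : C →o C :=
  ⟨fun x => A.nil ⊓ A.seq c x, fun _ _ h => inf_le_inf_left _ (A.seq_mono_right c h)⟩

theorem nil_inf_seq_omega (c : C) : A.nil ⊓ A.seq c (A.omega c) = A.omega c :=
  (A.omegaStep c).map_lfp

theorem omega_le {c x : C} (h : A.nil ⊓ A.seq c x ≤ x) : A.omega c ≤ x :=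
  (A.omegaStep c).lfp_le h

theorem omega_mono : Monotone A.omega := fun c d hcd =>
  A.omega_le <| calc A.nil ⊓ A.seq c (A.omega d)
      ≤ A.nil ⊓ A.seq d (A.omega d) := inf_le_inf_left _ (A.seq_mono_left _ hcd)
    _ = A.omega d := A.nil_inf_seq_omega d

theorem conj_nil_inf_seq_nil {a : C} (ha : A.Atomic a) (c : C) :
    A.conj (A.nil ⊓ A.seq a c) A.nil = A.nil := by
  rw [A.conj_comm, conj_inf_right, A.conj_idem, A.conj_comm A.nil,
    A.conj_atomic_seq_nil a c ha, inf_top_eq]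

theorem conj_nil_inf_seq_seq {a b : C} (ha : A.Atomic a) (hb : A.Atomic b) (c d : C) :
    A.conj (A.nil ⊓ A.seq a c) (A.seq b d) = A.seq (A.conj a b) (A.conj c d) := by
  rw [A.conj_comm, conj_inf_right, A.conj_atomic_seq_nil b d hb, top_inf_eq,
    A.conj_interchange b a d c hb ha, A.conj_comm b a, A.conj_comm d c]

theorem nil_inf_seq_conj_conj_omega {a b : C} (ha : A.Atomic a) (hb : A.Atomic b) :
    A.nil ⊓ A.seq (A.conj a b) (A.conj (A.omega a) (A.omega b)) =
      A.conj (A.omega a) (A.omega b) := by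
  conv_rhs => rw [← A.nil_inf_seq_omega a, ← A.nil_inf_seq_omega b]
  rw [conj_inf_right, A.conj_nil_inf_seq_nil ha, A.conj_nil_inf_seq_seq ha hb]

end CRA

theorem atomic_iteration_conjunction_general {C : Type*} [CompleteDistribLattice C] (A : CRA C)
    (a b : C) (ha : A.Atomic a) (hb : A.Atomic b) :
    A.conj (A.omega a) (A.omega b) = A.omega (A.conj a b) := by
  have hab : A.conj a b = a ⊔ b := A.conj_atomic a b ha hb
  apply le_antisymm
  · exact A.conj_le (A.omega_mono (hab ▸ le_sup_left)) (A.omega_mono (hab ▸ le_sup_right))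
  · exact A.omega_le (A.nil_inf_seq_conj_conj_omega ha hb).le

theorem atomic_iteration_conjunction {C : Type*} [CompleteDistribLattice C] (A : CRA C)
    (hconj : ∀ (c : C) (S : Set C), S.Nonempty → A.seq c (sInf S) = ⨅ d ∈ S, A.seq c d)
    (hinfconj : ∀ a b, A.Atomic a → A.Atomic b →
      A.conj (A.inft a) (A.inft b) = A.inft (A.conj a b))
    (a b : C) (ha : A.Atomic a) (hb : A.Atomic b) :
    A.conj (A.omega a) (A.omega b) = A.omega (A.conj a b) :=
  atomic_iteration_conjunction_general A a b ha hb
end
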